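/- For any deterministic real sequence (h_n)_{n∈ℤ}, and for every m ∈ ℤ, the limit l_m := lim_{n→−∞} f_{h_m} ∘ f_{h_{m-1}} ∘ ⋯ ∘ f_{h_n}(aΓ) exists and is independent of a ∈ {−1, +1}; moreover the resulting sequence satisfies l_m = f_{h_m}(l_{m-1}) for all m ∈ ℤ. -/

import Mathlib

/-- The one-step map `f_h` of the projective chain. -/
noncomputable def fh (Γ h y : ℝ) : ℝ :=
  y + 2 * h + Real.log ((1 + Real.exp (-Γ - (y + 2 * h))) / (1 + Real.exp (-Γ + (y + 2 * h))))

/-- `compUp Γ h n k x = f_{h (n+k)} ∘ ⋯ ∘ f_{h n} (x)` for a field indexed by `ℤ`. -/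
noncomputable def compUp (Γ : ℝ) (h : ℤ → ℝ) (n : ℤ) : ℕ → ℝ → ℝ
  | 0, x => fh Γ (h n) x
  | k + 1, x => fh Γ (h (n + k + 1)) (compUp Γ h n k x)

/-!
Each `f_h` maps `ℝ` into `[-Γ, Γ]` and is a contraction with rate `tanh (Γ / 2) < 1`, so a
composition of `k + 1` of them shrinks distances by `tanh (Γ / 2) ^ (k + 1)`. Consecutive terms of
a backward orbit are the images of `x` and of `f_h x` under the same composition, both starting
in `[-Γ, Γ]`, so the backward orbits are Cauchy, and all starting points in `[-Γ, Γ]` give the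
same limit. Continuity of `f_{h_m}` passes the recursion `l_m = f_{h_m} (l_{m-1})` to the limit.
-/

open Real Filter Topology

lemma fh_eq_add_log_sub_log (Γ h y : ℝ) :
    fh Γ h y = y + 2 * h + log (1 + exp (-Γ - (y + 2 * h))) - log (1 + exp (-Γ + (y + 2 * h))) := by
  rw [fh, log_div (by positivity) (by positivity), add_sub_assoc]

lemma log_one_add_exp_le {Γ : ℝ} (hΓ : 0 ≤ Γ) (u : ℝ) :
    log (1 + exp (-Γ - u)) ≤ log (1 + exp (-Γ + u)) + (Γ - u) := by
  have hmul : (1 + exp (-Γ + u)) * exp (Γ - u) = 1 + exp (Γ - u) := by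
    rw [add_mul, one_mul, ← exp_add, show -Γ + u + (Γ - u) = 0 by ring, exp_zero, add_comm]
  rw [← log_exp (Γ - u), ← log_mul (by positivity) (by positivity), hmul]
  gcongr
  linarith

lemma abs_fh_le {Γ : ℝ} (hΓ : 0 ≤ Γ) (h y : ℝ) : |fh Γ h y| ≤ Γ := by
  have upper := log_one_add_exp_le hΓ (y + 2 * h)
  have lower := log_one_add_exp_le hΓ (-(y + 2 * h))
  rw [sub_neg_eq_add, ← sub_eq_add_neg] at lower
  rw [fh_eq_add_log_sub_log, abs_le]
  constructor <;> linarith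

lemma hasDerivAt_fh (Γ h y : ℝ) :
    HasDerivAt (fh Γ h)
      (1 - exp (-Γ - (y + 2 * h)) / (1 + exp (-Γ - (y + 2 * h)))
        - exp (-Γ + (y + 2 * h)) / (1 + exp (-Γ + (y + 2 * h)))) y := by
  have hu : HasDerivAt (fun z : ℝ => z + 2 * h) 1 y := (hasDerivAt_id y).add_const _
  have hminus := ((hu.const_sub (-Γ)).exp.const_add 1).log (by positivity)
  have hplus := ((hu.const_add (-Γ)).exp.const_add 1).log (by positivity)
  rw [funext (fh_eq_add_log_sub_log Γ h)]
  exact ((hu.add hminus).sub hplus).congr_deriv (by ring)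

/-- This is `tanh (Γ / 2)`, the supremum of `|f_h'|`. -/
noncomputable def fhRate (Γ : ℝ) : ℝ := (1 - exp (-Γ)) / (1 + exp (-Γ))

lemma fhRate_nonneg {Γ : ℝ} (hΓ : 0 ≤ Γ) : 0 ≤ fhRate Γ :=
  div_nonneg (sub_nonneg.2 (exp_le_one_iff.2 (neg_nonpos.2 hΓ))) (by positivity)

lemma fhRate_lt_one (Γ : ℝ) : fhRate Γ < 1 := by
  rw [fhRate, div_lt_one (by positivity)]
  linarith [exp_pos (-Γ)]

lemma abs_deriv_fh_le {Γ : ℝ} (hΓ : 0 ≤ Γ) (h y : ℝ) :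
    |1 - exp (-Γ - (y + 2 * h)) / (1 + exp (-Γ - (y + 2 * h)))
      - exp (-Γ + (y + 2 * h)) / (1 + exp (-Γ + (y + 2 * h)))| ≤ fhRate Γ := by
  set a := exp (-Γ - (y + 2 * h))
  set b := exp (-Γ + (y + 2 * h))
  set c := exp (-Γ)
  have hab : a * b = c * c := by simp only [a, b, c, ← exp_add]; ring_nf
  have ha : 0 < a := exp_pos _
  have hb : 0 < b := exp_pos _
  have hc : 0 < c := exp_pos _
  have hc1 : c ≤ 1 := exp_le_one_iff.2 (neg_nonpos.2 hΓ)
  -- AM-GM: `a + b ≥ 2 √(ab) = 2c`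
  have hsum : 2 * c ≤ a + b := by nlinarith [sq_nonneg (a - b)]
  have key : 1 - a / (1 + a) - b / (1 + b) = (1 - c * c) / ((1 + a) * (1 + b)) := by
    field_simp
    linear_combination -hab
  have hnum : 0 ≤ 1 - c * c := by nlinarith
  rw [key, abs_of_nonneg (by positivity)]
  calc (1 - c * c) / ((1 + a) * (1 + b)) ≤ (1 - c * c) / ((1 + c) * (1 + c)) :=
        div_le_div_of_nonneg_left hnum (by positivity) (by nlinarith)
    _ = fhRate Γ := by rw [fhRate]; field_simp; ring

lemma lipschitzWith_fh {Γ : ℝ} (hΓ : 0 ≤ Γ) (h : ℝ) :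
    LipschitzWith (fhRate Γ).toNNReal (fh Γ h) := by
  refine lipschitzWith_of_nnnorm_deriv_le (fun y => (hasDerivAt_fh Γ h y).differentiableAt)
    fun y => ?_
  rw [(hasDerivAt_fh Γ h y).deriv, ← NNReal.coe_le_coe, coe_nnnorm,
    Real.coe_toNNReal _ (fhRate_nonneg hΓ)]
  exact abs_deriv_fh_le hΓ h y

lemma lipschitzWith_compUp {Γ : ℝ} (hΓ : 0 ≤ Γ) (h : ℤ → ℝ) (n : ℤ) (k : ℕ) :
    LipschitzWith ((fhRate Γ).toNNReal ^ (k + 1)) (compUp Γ h n k) := by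
  induction k with
  | zero =>
    rw [zero_add, pow_one]
    exact lipschitzWith_fh hΓ (h n)
  | succ k ih =>
    rw [pow_succ']
    exact (lipschitzWith_fh hΓ _).comp ih

lemma compUp_succ_eq_fh_compUp (Γ : ℝ) (h : ℤ → ℝ) (m : ℤ) (k : ℕ) (x : ℝ) :
    compUp Γ h (m - (k + 1 : ℕ)) (k + 1) x = fh Γ (h m) (compUp Γ h (m - 1 - k) k x) := by
  rw [compUp]
  congr 2 <;> push_cast <;> ring

lemma compUp_succ_eq_compUp_fh (Γ : ℝ) (h : ℤ → ℝ) (n : ℤ) (k : ℕ) (x : ℝ) :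
    compUp Γ h n (k + 1) x = compUp Γ h (n + 1) k (fh Γ (h n) x) := by
  induction k with
  | zero => simp [compUp]
  | succ k ih =>
    rw [compUp, ih, compUp]
    congr 2
    push_cast; ring

lemma dist_compUp_le {Γ : ℝ} (hΓ : 0 ≤ Γ) (h : ℤ → ℝ) (n : ℤ) (k : ℕ) {x y : ℝ}
    (hx : |x| ≤ Γ) (hy : |y| ≤ Γ) :
    dist (compUp Γ h n k x) (compUp Γ h n k y) ≤ 2 * Γ * fhRate Γ ^ (k + 1) := by
  have hxy : dist x y ≤ 2 * Γ := by
    rw [Real.dist_eq]; linarith [abs_sub x y]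
  calc dist (compUp Γ h n k x) (compUp Γ h n k y)
      ≤ fhRate Γ ^ (k + 1) * dist x y := by
        simpa [Real.coe_toNNReal _ (fhRate_nonneg hΓ)] using
          (lipschitzWith_compUp hΓ h n k).dist_le_mul x y
    _ ≤ fhRate Γ ^ (k + 1) * (2 * Γ) := by gcongr; exact pow_nonneg (fhRate_nonneg hΓ) _
    _ = 2 * Γ * fhRate Γ ^ (k + 1) := mul_comm _ _

lemma cauchySeq_compUp {Γ : ℝ} (hΓ : 0 ≤ Γ) (h : ℤ → ℝ) (m : ℤ) {x : ℝ} (hx : |x| ≤ Γ) :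
    CauchySeq fun k : ℕ => compUp Γ h (m - k) k x := by
  refine cauchySeq_of_le_geometric (fhRate Γ) (2 * Γ * fhRate Γ) (fhRate_lt_one Γ) fun k => ?_
  have hshift : m - (k + 1 : ℕ) + 1 = m - k := by push_cast; ring
  rw [compUp_succ_eq_compUp_fh, hshift]
  exact (dist_compUp_le hΓ h _ k hx (abs_fh_le hΓ _ _)).trans_eq (by ring)

lemma tendsto_dist_compUp {Γ : ℝ} (hΓ : 0 ≤ Γ) (h : ℤ → ℝ) (m : ℤ) {x y : ℝ}
    (hx : |x| ≤ Γ) (hy : |y| ≤ Γ) :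
    Tendsto (fun k : ℕ => dist (compUp Γ h (m - k) k x) (compUp Γ h (m - k) k y)) atTop (𝓝 0) := by
  have hlim : Tendsto (fun k : ℕ => 2 * Γ * fhRate Γ ^ (k + 1)) atTop (𝓝 0) := by
    simpa using ((tendsto_pow_atTop_nhds_zero_of_lt_one (fhRate_nonneg hΓ)
      (fhRate_lt_one Γ)).comp (tendsto_add_atTop_nat 1)).const_mul (2 * Γ)
  exact squeeze_zero (fun _ => dist_nonneg) (fun k => dist_compUp_le hΓ h _ k hx hy) hlim

lemma exists_tendsto_compUp {Γ : ℝ} (hΓ : 0 ≤ Γ) (h : ℤ → ℝ) (m : ℤ) :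
    ∃ L, ∀ x, |x| ≤ Γ → Tendsto (fun k : ℕ => compUp Γ h (m - k) k x) atTop (𝓝 L) := by
  have hΓabs : |Γ| ≤ Γ := (abs_of_nonneg hΓ).le
  exact ⟨_, fun x hx => (cauchySeq_compUp hΓ h m hΓabs).tendsto_limUnder.congr_dist
    (tendsto_dist_compUp hΓ h m hΓabs hx)⟩

/-- For any deterministic real sequence `(h_n)_{n ∈ ℤ}`, the limits
`l_m = lim_{n → -∞} f_{h_m} ∘ ⋯ ∘ f_{h_n}(aΓ)` exist, do not depend on
`a ∈ {-1, +1}`, and the limiting sequence satisfies `l_m = f_{h_m}(l_{m-1})`. -/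
theorem stmt_7 (Γ : ℝ) (hΓ : 0 < Γ) (h : ℤ → ℝ) :
    ∃ l : ℤ → ℝ,
      (∀ m : ℤ, ∀ a : ℝ, a = 1 ∨ a = -1 →
        Filter.Tendsto (fun k : ℕ => compUp Γ h (m - k) k (a * Γ)) Filter.atTop
          (nhds (l m))) ∧
      ∀ m : ℤ, l m = fh Γ (h m) (l (m - 1)) := by
  choose l hl using exists_tendsto_compUp hΓ.le h
  have hΓabs : |Γ| ≤ Γ := (abs_of_pos hΓ).le
  refine ⟨l, fun m a ha => hl m _ ?_, fun m => ?_⟩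
  · rcases ha with rfl | rfl <;> simpa using hΓabs
  · have hcont := (lipschitzWith_fh hΓ.le (h m)).continuous.tendsto (l (m - 1))
    refine tendsto_nhds_unique ((hl m Γ hΓabs).comp (tendsto_add_atTop_nat 1)) ?_
    exact (hcont.comp (hl (m - 1) Γ hΓabs)).congr
      fun k => (compUp_succ_eq_fh_compUp Γ h m k Γ).symm
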